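/- arXiv:1309.2810 — 5 statements merged into one kernel-verified Lean document; each statement's English description precedes it below -/
import Mathlib

section
/- Let X be a compact metric space, K ⊂ M_+(X) nonempty, convex, weakly compact, closed under domination, and Cap(A) = sup{μ(A) : μ ∈ K}. If ν is a finite nonnegative Borel measure on X majorized by Cap (i.e. ν(A) ≤ Cap(A) for all Borel A), then ν is the supremum (upper envelope) of the set {μ ∈ ∪_{n≥1} n·K : μ ≤ ν}. -/
/-!
Write `t` for the envelope and fix `n ≥ 1`, `δ > 0`. For `κ ∈ K`, the infimum `m` of `ν|_A` and
`n • κ`, computed on a Hahn set, lies in `n • K` (since `n⁻¹ • m ≤ κ`) and below `ν`, so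
`m X = m A ≤ t`. Approximating the Hahn set by an Urysohn function gives a continuous
`0 ≤ f ≤ 1`, stored as a pair `f + f' = 1`, with `∫ f' ∂ν|_A + n ∫ f ∂κ ≤ t + δ`. This cost is
weakly continuous and affine in `κ`, so compactness of `K` and the minimax theorem on a finite
simplex give one `f` that works for all `κ ∈ K` at once. Markov's inequality then bounds
`κ {s ≤ f}` uniformly on `K`, hence `ν {s ≤ f}` by majorization, and
`ν A ≤ ∫ f' ∂ν|_A + ν {s ≤ f} + s ν X ≤ t + 3δ` once `n` is large and `s` small.
-/

open MeasureTheory Set BoundedContinuousFunction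
open scoped NNReal ENNReal

theorem exists_mem_stdSimplex_forall_dotProduct_le {ι : Type*} [Fintype ι] {C : Set (ι → ℝ)}
    (hC : Convex ℝ C) (hCc : IsCompact C) (hCne : C.Nonempty) {s : ℝ}
    (h : ∀ y ∈ C, ∃ i, y i ≤ s) :
    ∃ w ∈ stdSimplex ℝ ι, ∀ y ∈ C, w ⬝ᵥ y ≤ s := by
  classical
  obtain ⟨y₀, hy₀⟩ := hCne
  obtain ⟨i₀, -⟩ := h y₀ hy₀
  obtain ⟨w, hw, b, hb, hwb⟩ := Sion.exists_isSaddlePointOn (f := (· ⬝ᵥ ·))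
    ⟨_, single_mem_stdSimplex ℝ i₀⟩ (convex_stdSimplex ℝ ι) (isCompact_stdSimplex ℝ ι)
    (fun y _ => (continuous_id.dotProduct continuous_const).lowerSemicontinuous
      |>.lowerSemicontinuousOn _)
    (fun y _ => ((dotProductBilin ℝ ℝ).flip y).convexOn (convex_stdSimplex ℝ ι) |>.quasiconvexOn)
    hC ⟨y₀, hy₀⟩ hCc
    (fun w _ => (continuous_const.dotProduct continuous_id).upperSemicontinuous
      |>.upperSemicontinuousOn _)
    (fun w _ => (dotProductBilin ℝ ℝ w).concaveOn hC |>.quasiconcaveOn)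
  obtain ⟨i, hi⟩ := h b hb
  refine ⟨w, hw, fun y hy => (hwb _ (single_mem_stdSimplex ℝ i) y hy).trans ?_⟩
  simpa using hi

section Partition

variable {X : Type*} [TopologicalSpace X]

theorem BoundedContinuousFunction.apply_le_one_of_add_eq_one {f f' : X →ᵇ ℝ≥0}
    (h : f + f' = 1) (x : X) : f x ≤ 1 := by
  have := congrArg (· x) h
  simp only [coe_add, Pi.add_apply, coe_one, Pi.one_apply] at this
  exact this ▸ le_self_add

theorem exists_add_eq_one_eqOn_zero [NormalSpace X] {s t : Set X} (hs : IsClosed s)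
    (ht : IsClosed t) (hst : Disjoint s t) :
    ∃ f f' : X →ᵇ ℝ≥0, f + f' = 1 ∧ EqOn f 0 s ∧ EqOn f' 0 t := by
  obtain ⟨g, hgs, hgt, hg⟩ := exists_bounded_zero_one_of_closed hs ht hst
  refine ⟨g.nnrealPart, (1 - g).nnrealPart, ?_, fun x hx => ?_, fun x hx => ?_⟩
  · ext x
    simp [nnrealPart_coeFn_eq, ← Real.toNNReal_add (hg x).1 (sub_nonneg.2 (hg x).2)]
  · simp [nnrealPart_coeFn_eq, hgs hx]
  · simp [nnrealPart_coeFn_eq, hgt hx]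

variable [MeasurableSpace X]

theorem lintegral_add_lintegral_of_add_eq_one [OpensMeasurableSpace X] {f f' : X →ᵇ ℝ≥0}
    (h : f + f' = 1) (μ : Measure X) :
    ∫⁻ x, f x ∂μ + ∫⁻ x, f' x ∂μ = μ univ := by
  rw [← lintegral_add_left f.continuous.measurable.coe_nnreal_ennreal, ← lintegral_one]
  congr with x
  simpa using congrArg (fun g : X →ᵇ ℝ≥0 => (g x : ℝ≥0∞)) h

theorem lintegral_le_measure_of_eqOn_zero {f : X →ᵇ ℝ≥0} (hf : ∀ x, f x ≤ 1) {s : Set X}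
    (hs : EqOn f 0 sᶜ) (μ : Measure X) : ∫⁻ x, f x ∂μ ≤ μ s :=
  lintegral_le_meas (fun x => ENNReal.coe_le_one_iff.2 (hf x)) fun x hx => by simp [hs hx]

end Partition

section Hahn

variable {X : Type*} [MeasurableSpace X]

theorem MeasureTheory.Measure.restrict_le_restrict_of_forall_le {μ ν : Measure X} {S : Set X}
    (hS : MeasurableSet S) (h : ∀ B, MeasurableSet B → B ⊆ S → μ B ≤ ν B) :
    μ.restrict S ≤ ν.restrict S :=
  Measure.le_iff.2 fun B hB => by
    simpa [Measure.restrict_apply hB] using h _ (hB.inter hS) inter_subset_right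

theorem exists_le_le_measure_univ_eq_add (μ ν : Measure X) [IsFiniteMeasure μ]
    [IsFiniteMeasure ν] : ∃ S, MeasurableSet S ∧ ∃ m ≤ μ, m ≤ ν ∧ m univ = μ Sᶜ + ν S := by
  obtain ⟨S, hS, hνμ, hμν⟩ := hahn_decomposition μ ν
  refine ⟨S, hS, μ.restrict Sᶜ + ν.restrict S, ?_, ?_, by simp⟩
  · calc μ.restrict Sᶜ + ν.restrict S ≤ μ.restrict Sᶜ + μ.restrict S :=
          add_le_add_right (Measure.restrict_le_restrict_of_forall_le hS hνμ) _
      _ = μ := by rw [add_comm, Measure.restrict_add_restrict_compl hS]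
  · calc μ.restrict Sᶜ + ν.restrict S ≤ ν.restrict Sᶜ + ν.restrict S :=
          add_le_add_left (Measure.restrict_le_restrict_of_forall_le hS.compl hμν) _
      _ = ν := by rw [add_comm, Measure.restrict_add_restrict_compl hS]

variable [PseudoMetricSpace X] [BorelSpace X]

theorem exists_add_eq_one_lintegral_le_measure_add (μ ν : Measure X) [IsFiniteMeasure μ]
    [IsFiniteMeasure ν] {S : Set X} (hS : MeasurableSet S) {δ : ℝ≥0∞} (hδ : δ ≠ 0) :
    ∃ f f' : X →ᵇ ℝ≥0, f + f' = 1 ∧ ∫⁻ x, f' x ∂μ ≤ μ Sᶜ + δ ∧ ∫⁻ x, f x ∂ν ≤ ν S + δ := by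
  obtain ⟨F, hFS, hF, hμF⟩ := hS.exists_isClosed_sdiff_lt (measure_ne_top μ S) hδ
  obtain ⟨U, hSU, hU, -, hνU⟩ := hS.exists_isOpen_sdiff_lt (measure_ne_top ν S) hδ
  obtain ⟨f, f', hff', hf, hf'⟩ := exists_add_eq_one_eqOn_zero hU.isClosed_compl hF
    (disjoint_compl_left_iff_subset.2 (hFS.trans hSU))
  refine ⟨f, f', hff', ?_, ?_⟩
  · calc ∫⁻ x, f' x ∂μ ≤ μ Fᶜ := lintegral_le_measure_of_eqOn_zero
          (apply_le_one_of_add_eq_one ((add_comm f' f).trans hff')) (by rwa [compl_compl]) μ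
      _ ≤ μ (Sᶜ ∪ S \ F) := measure_mono fun x hx => by by_cases x ∈ S <;> simp_all
      _ ≤ μ Sᶜ + δ := (measure_union_le _ _).trans (by gcongr)
  · calc ∫⁻ x, f x ∂ν ≤ ν U :=
          lintegral_le_measure_of_eqOn_zero (apply_le_one_of_add_eq_one hff') hf ν
      _ = ν (S ∪ U \ S) := by rw [union_sdiff_cancel hSU]
      _ ≤ ν S + δ := (measure_union_le _ _).trans (by gcongr)

theorem exists_le_le_add_eq_one_lintegral_le (μ ν : Measure X) [IsFiniteMeasure μ]
    [IsFiniteMeasure ν] {δ : ℝ≥0∞} (hδ : δ ≠ 0) :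
    ∃ m ≤ μ, m ≤ ν ∧ ∃ f f' : X →ᵇ ℝ≥0, f + f' = 1 ∧
      ∫⁻ x, f' x ∂μ + ∫⁻ x, f x ∂ν ≤ m univ + δ := by
  obtain ⟨S, hS, m, hmμ, hmν, hm⟩ := exists_le_le_measure_univ_eq_add μ ν
  obtain ⟨f, f', hff', hμ, hν⟩ :=
    exists_add_eq_one_lintegral_le_measure_add μ ν hS (ENNReal.half_pos hδ).ne'
  refine ⟨m, hmμ, hmν, f, f', hff', ?_⟩
  calc ∫⁻ x, f' x ∂μ + ∫⁻ x, f x ∂ν ≤ (μ Sᶜ + δ / 2) + (ν S + δ / 2) := add_le_add hμ hν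
    _ = m univ + δ := by rw [hm, add_add_add_comm, ENNReal.add_halves]

end Hahn

namespace MeasureTheory.FiniteMeasure

variable {X : Type*} [TopologicalSpace X] [MeasurableSpace X]

theorem testAgainstNN_add_measure (κ₁ κ₂ : FiniteMeasure X) (f : X →ᵇ ℝ≥0) :
    (κ₁ + κ₂).testAgainstNN f = κ₁.testAgainstNN f + κ₂.testAgainstNN f := by
  apply ENNReal.coe_injective
  simp only [ENNReal.coe_add, testAgainstNN_coe_eq, toMeasure_add, lintegral_add_measure]

theorem testAgainstNN_sum [OpensMeasurableSpace X] (κ : FiniteMeasure X) {ι : Type*}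
    (s : Finset ι) (w : ι → ℝ≥0) (f : ι → X →ᵇ ℝ≥0) :
    κ.testAgainstNN (∑ i ∈ s, w i • f i) = ∑ i ∈ s, w i * κ.testAgainstNN (f i) := by
  simp [← coe_toWeakDualBCNN, map_sum]

end MeasureTheory.FiniteMeasure

section Minimax

variable {X : Type*} [TopologicalSpace X] [MeasurableSpace X] [OpensMeasurableSpace X]
  (μ : Measure X) [IsFiniteMeasure μ] (c : ℝ≥0) {K : Set (FiniteMeasure X)}

open FiniteMeasure in
theorem exists_add_eq_one_forall_lintegral_le_of_finite {ι : Type*} [Fintype ι]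
    (hK : IsCompact K) (hKc : Convex ℝ≥0 K) (hne : K.Nonempty) {T : ℝ≥0}
    (f f' : ι → X →ᵇ ℝ≥0) (hff' : ∀ i, f i + f' i = 1)
    (h : ∀ κ ∈ K, ∃ i, ∫⁻ x, f' i x ∂μ + c * ∫⁻ x, f i x ∂κ ≤ T) :
    ∃ F F' : X →ᵇ ℝ≥0, F + F' = 1 ∧ ∀ κ ∈ K, ∫⁻ x, F' x ∂μ + c * ∫⁻ x, F x ∂κ ≤ T := by
  set μ' : FiniteMeasure X := ⟨μ, ‹_›⟩
  have hcost (g g' : X →ᵇ ℝ≥0) (κ : FiniteMeasure X) : ∫⁻ x, g' x ∂μ + c * ∫⁻ x, g x ∂κ =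
      ((μ'.testAgainstNN g' + c * κ.testAgainstNN g : ℝ≥0) : ℝ≥0∞) := by
    simp only [ENNReal.coe_add, ENNReal.coe_mul, testAgainstNN_coe_eq]
    rfl
  let G : FiniteMeasure X → ι → ℝ := fun κ i =>
    ((μ'.testAgainstNN (f' i) + c * κ.testAgainstNN (f i) : ℝ≥0) : ℝ)
  have hG : Continuous G := continuous_pi fun i => NNReal.continuous_coe.comp <|
    continuous_const.add (continuous_const.mul (continuous_testAgainstNN_eval (f i)))
  have hGK : Convex ℝ (G '' K) := by
    rintro _ ⟨κ₁, h₁, rfl⟩ _ ⟨κ₂, h₂, rfl⟩ a b ha hb hab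
    refine ⟨a.toNNReal • κ₁ + b.toNNReal • κ₂, hKc h₁ h₂ zero_le zero_le ?_, ?_⟩
    · rw [← Real.toNNReal_add ha hb, hab, Real.toNNReal_one]
    · ext i
      simp only [G, testAgainstNN_add_measure, smul_testAgainstNN_apply, NNReal.coe_add,
        NNReal.coe_mul, smul_eq_mul, Real.coe_toNNReal _ ha, Real.coe_toNNReal _ hb, Pi.add_apply,
        Pi.smul_apply]
      linear_combination (↑(μ'.testAgainstNN (f' i)) : ℝ) * hab.symm
  obtain ⟨w, ⟨hw0, hw1⟩, hwG⟩ := exists_mem_stdSimplex_forall_dotProduct_le hGK (hK.image hG)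
    (hne.image G) (s := T) <| by
      rintro _ ⟨κ, hκ, rfl⟩
      obtain ⟨i, hi⟩ := h κ hκ
      exact ⟨i, by rw [hcost] at hi; exact_mod_cast hi⟩
  set w' : ι → ℝ≥0 := fun i => (w i).toNNReal
  have hw' : ∑ i, w' i = 1 := by
    rw [← Real.toNNReal_sum_of_nonneg fun i _ => hw0 i, hw1, Real.toNNReal_one]
  refine ⟨∑ i, w' i • f i, ∑ i, w' i • f' i, ?_, fun κ hκ => ?_⟩
  · rw [← Finset.sum_add_distrib]
    simp_rw [← smul_add, hff', ← Finset.sum_smul, hw', one_smul]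
  · rw [hcost, testAgainstNN_sum, testAgainstNN_sum, ENNReal.coe_le_coe, ← NNReal.coe_le_coe]
    convert hwG _ ⟨κ, hκ, rfl⟩ using 1
    simp only [dotProduct, G, w', NNReal.coe_add, NNReal.coe_mul, NNReal.coe_sum,
      Real.coe_toNNReal _ (hw0 _), mul_add, Finset.sum_add_distrib, Finset.mul_sum, mul_left_comm]

theorem exists_add_eq_one_forall_lintegral_le (hK : IsCompact K) (hKc : Convex ℝ≥0 K)
    (hne : K.Nonempty) {T : ℝ≥0} (h : ∀ κ ∈ K, ∃ f f' : X →ᵇ ℝ≥0, f + f' = 1 ∧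
      ∫⁻ x, f' x ∂μ + c * ∫⁻ x, f x ∂κ < T) :
    ∃ F F' : X →ᵇ ℝ≥0, F + F' = 1 ∧ ∀ κ ∈ K, ∫⁻ x, F' x ∂μ + c * ∫⁻ x, F x ∂κ ≤ T := by
  choose! f f' hff' hlt using h
  obtain ⟨J, hJK, hcover⟩ := hK.elim_nhds_subcover
    (fun κ => {κ' : FiniteMeasure X | ∫⁻ x, f' κ x ∂μ + c * ∫⁻ x, f κ x ∂κ' < T})
    fun κ hκ => (isOpen_lt (continuous_const.add ((ENNReal.continuous_const_mul
      ENNReal.coe_ne_top).comp (FiniteMeasure.continuous_lintegral_boundedContinuousFunction _)))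
      continuous_const).mem_nhds (hlt κ hκ)
  refine exists_add_eq_one_forall_lintegral_le_of_finite μ c hK hKc hne (fun κ : J => f κ)
    (fun κ => f' κ) (fun κ => hff' κ (hJK κ κ.2)) fun κ hκ => ?_
  obtain ⟨κ', hκ', hlt'⟩ := mem_iUnion₂.1 (hcover hκ)
  exact ⟨⟨κ', hκ'⟩, hlt'.le⟩

end Minimax

section Capacity

variable {X : Type*} [MeasurableSpace X] {K : Set (FiniteMeasure X)} {ν : Measure X}

def IsConeMinorant (K : Set (FiniteMeasure X)) (ν m : Measure X) : Prop :=
  (∃ n : ℕ, 1 ≤ n ∧ ∃ κ ∈ K, m = (n : ℝ≥0∞) • (κ : Measure X)) ∧ m ≤ ν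

theorem exists_mem_eq_smul_of_le_smul
    (hdown : ∀ ν ∈ K, ∀ τ : FiniteMeasure X, (τ : Measure X) ≤ (ν : Measure X) → τ ∈ K)
    {κ : FiniteMeasure X} (hκ : κ ∈ K) {c : ℝ≥0} (hc : c ≠ 0) {m : Measure X}
    (hm : m ≤ c • (κ : Measure X)) : ∃ τ ∈ K, m = c • (τ : Measure X) := by
  have : IsFiniteMeasure m := isFiniteMeasure_of_le _ hm
  refine ⟨⟨c⁻¹ • m, inferInstance⟩, hdown κ hκ _ ?_, (smul_inv_smul₀ hc m).symm⟩
  calc c⁻¹ • m ≤ c⁻¹ • c • (κ : Measure X) := by gcongr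
    _ = κ := inv_smul_smul₀ hc _

theorem lintegral_le_add_of_forall_lintegral_le
    (hmaj : ∀ A : Set X, MeasurableSet A → ν A ≤ ⨆ τ ∈ K, (τ : Measure X) A)
    {F : X → ℝ≥0∞} (hFm : Measurable F) (hF : ∀ x, F x ≤ 1) {s : ℝ≥0} (hs : s ≠ 0)
    {b : ℝ≥0∞} (hb : ∀ κ ∈ K, ∫⁻ x, F x ∂κ ≤ s * b) :
    ∫⁻ x, F x ∂ν ≤ b + s * ν univ := by
  set B := {x | (s : ℝ≥0∞) ≤ F x}
  have hBm : MeasurableSet B := measurableSet_le measurable_const hFm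
  have hB : ν B ≤ b := (hmaj B hBm).trans <| iSup₂_le fun κ hκ =>
    (ENNReal.mul_le_mul_iff_right (ENNReal.coe_ne_zero.2 hs) ENNReal.coe_ne_top).1
      ((mul_meas_ge_le_lintegral₀ hFm.aemeasurable s).trans (hb κ hκ))
  calc ∫⁻ x, F x ∂ν ≤ ∫⁻ x, B.indicator 1 x + s ∂ν := lintegral_mono fun x => by
        by_cases hx : x ∈ B
        · simpa [hx] using (hF x).trans le_self_add
        · simpa [hx] using (not_le.1 hx).le
    _ = ν B + s * ν univ := by
        rw [lintegral_add_left (measurable_one.indicator hBm), lintegral_indicator_one hBm,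
          lintegral_const]
    _ ≤ b + s * ν univ := by gcongr

theorem measure_le_add_of_forall_lintegral_le [TopologicalSpace X] [OpensMeasurableSpace X]
    (hmaj : ∀ A : Set X, MeasurableSet A → ν A ≤ ⨆ τ ∈ K, (τ : Measure X) A)
    (hne : K.Nonempty) {A : Set X} {F F' : X →ᵇ ℝ≥0} (hFF' : F + F' = 1) {n : ℕ}
    {a b : ℝ≥0∞} (hF : ∀ κ ∈ K, ∫⁻ x, F' x ∂(ν.restrict A) + n * ∫⁻ x, F x ∂κ ≤ a)
    {s : ℝ≥0} (hs : s ≠ 0) (hab : a < n * (s * b)) :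
    ν A ≤ a + b + s * ν univ := by
  have hn : (n : ℝ≥0∞) ≠ 0 := by rintro hn; simp [hn] at hab
  have hFK (κ) (hκ : κ ∈ K) : ∫⁻ x, F x ∂κ ≤ s * b :=
    (ENNReal.mul_le_mul_iff_right hn (ENNReal.natCast_ne_top n)).1
      ((le_add_self.trans (hF κ hκ)).trans hab.le)
  obtain ⟨κ₀, hκ₀⟩ := hne
  calc ν A = ∫⁻ x, F' x ∂(ν.restrict A) + ∫⁻ x, F x ∂(ν.restrict A) := by
        rw [add_comm, lintegral_add_lintegral_of_add_eq_one hFF', Measure.restrict_apply_univ]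
    _ ≤ a + (b + s * ν univ) := add_le_add (le_self_add.trans (hF κ₀ hκ₀))
        ((lintegral_mono' Measure.restrict_le_self le_rfl).trans
          (lintegral_le_add_of_forall_lintegral_le hmaj (by fun_prop)
            (fun x => ENNReal.coe_le_one_iff.2 (apply_le_one_of_add_eq_one hFF' x)) hs hFK))
    _ = a + b + s * ν univ := (add_assoc _ _ _).symm

end Capacity

section Envelope

variable {X : Type*} [PseudoMetricSpace X] [MeasurableSpace X] [BorelSpace X]
  {K : Set (FiniteMeasure X)} {ν : Measure X} [IsFiniteMeasure ν] {A : Set X} {t : ℝ≥0∞}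

theorem exists_add_eq_one_lintegral_restrict_add_le
    (hdown : ∀ ν ∈ K, ∀ τ : FiniteMeasure X, (τ : Measure X) ≤ (ν : Measure X) → τ ∈ K)
    (hA : MeasurableSet A) (ht : ∀ m, IsConeMinorant K ν m → m A ≤ t)
    {n : ℕ} (hn : n ≠ 0) {κ : FiniteMeasure X} (hκ : κ ∈ K) {δ : ℝ≥0∞} (hδ : δ ≠ 0) :
    ∃ f f' : X →ᵇ ℝ≥0, f + f' = 1 ∧
      ∫⁻ x, f' x ∂(ν.restrict A) + n * ∫⁻ x, f x ∂κ ≤ t + δ := by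
  obtain ⟨m, hmν, hmκ, f, f', hff', hle⟩ :=
    exists_le_le_add_eq_one_lintegral_le (ν.restrict A) ((n : ℝ≥0) • (κ : Measure X)) hδ
  obtain ⟨τ, hτ, rfl⟩ := exists_mem_eq_smul_of_le_smul hdown hκ (Nat.cast_ne_zero.2 hn) hmκ
  have hAc : ((n : ℝ≥0) • (τ : Measure X)) Aᶜ = 0 :=
    le_antisymm ((hmν _).trans (by simp [Measure.restrict_apply' hA])) zero_le
  have hmA := ht _ ⟨⟨n, Nat.one_le_iff_ne_zero.2 hn, τ, hτ, by simp [ENNReal.smul_def]⟩,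
    hmν.trans Measure.restrict_le_self⟩
  refine ⟨f, f', hff', ?_⟩
  rw [← measure_add_measure_compl hA, hAc, add_zero] at hle
  simpa [lintegral_smul_measure, ENNReal.smul_def] using hle.trans (by gcongr)

theorem exists_add_eq_one_forall_lintegral_restrict_add_le (hK : IsCompact K)
    (hKc : Convex ℝ≥0 K) (hne : K.Nonempty)
    (hdown : ∀ ν ∈ K, ∀ τ : FiniteMeasure X, (τ : Measure X) ≤ (ν : Measure X) → τ ∈ K)
    (hA : MeasurableSet A) (ht : ∀ m, IsConeMinorant K ν m → m A ≤ t)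
    (ht_top : t ≠ ∞) {n : ℕ} (hn : n ≠ 0) {η : ℝ≥0} (hη : η ≠ 0) :
    ∃ F F' : X →ᵇ ℝ≥0, F + F' = 1 ∧
      ∀ κ ∈ K, ∫⁻ x, F' x ∂(ν.restrict A) + n * ∫⁻ x, F x ∂κ ≤ t + η := by
  have hT : ((t.toNNReal + η : ℝ≥0) : ℝ≥0∞) = t + η := by simp [ENNReal.coe_toNNReal ht_top]
  simpa [hT] using exists_add_eq_one_forall_lintegral_le (ν.restrict A) n hK hKc hne
    (T := t.toNNReal + η) fun κ hκ => by
      obtain ⟨f, f', hff', hle⟩ := exists_add_eq_one_lintegral_restrict_add_le hdown hA ht hn hκ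
        (ENNReal.coe_ne_zero.2 (half_pos (pos_iff_ne_zero.2 hη)).ne')
      refine ⟨f, f', hff', ?_⟩
      rw [hT, ENNReal.coe_natCast]
      exact hle.trans_lt (ENNReal.add_lt_add_left ht_top
        (ENNReal.coe_lt_coe.2 (half_lt_self (pos_iff_ne_zero.2 hη))))

end Envelope

theorem stmt_5_general {X : Type*} [MetricSpace X]
    [MeasurableSpace X] [BorelSpace X]
    (K : Set (FiniteMeasure X))
    (hne : K.Nonempty)
    (hconv : Convex ℝ≥0 K)
    (hcomp : IsCompact K)
    (hdown : ∀ ν ∈ K, ∀ τ : FiniteMeasure X, (τ : Measure X) ≤ (ν : Measure X) → τ ∈ K)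
    (ν : Measure X) [IsFiniteMeasure ν]
    (hmaj : ∀ A : Set X, MeasurableSet A → ν A ≤ ⨆ τ ∈ K, (τ : Measure X) A) :
    ∀ A : Set X, MeasurableSet A →
      ν A = ⨆ (m : Measure X) (_ : (∃ n : ℕ, 1 ≤ n ∧ ∃ κ ∈ K,
        m = (n : ℝ≥0∞) • (κ : Measure X)) ∧ m ≤ ν), m A := by
  intro A hA
  change ν A = ⨆ (m : Measure X) (_ : IsConeMinorant K ν m), m A
  refine le_antisymm (ENNReal.le_of_forall_pos_le_add fun ε hε ht_top => ?_)
    (iSup₂_le fun m hm => hm.2 A)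
  set t := ⨆ (m : Measure X) (_ : IsConeMinorant K ν m), m A
  set η : ℝ≥0 := ε / 3
  have hη : η ≠ 0 := by positivity
  obtain ⟨s, hs, hsν⟩ :=
    ENNReal.exists_nnreal_pos_mul_lt (measure_ne_top ν univ) (ENNReal.coe_ne_zero.2 hη)
  obtain ⟨n, hn⟩ := ENNReal.exists_nat_mul_gt (a := s * η) (b := t + η)
    (mul_ne_zero (ENNReal.coe_ne_zero.2 hs.ne') (ENNReal.coe_ne_zero.2 hη)) (by finiteness)
  have hn0 : n ≠ 0 := by rintro rfl; simp at hn
  obtain ⟨F, F', hFF', hF⟩ := exists_add_eq_one_forall_lintegral_restrict_add_le hcomp hconv hne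
    hdown hA (fun m hm => le_iSup₂ (f := fun m (_ : IsConeMinorant K ν m) => m A) m hm)
    ht_top.ne hn0 hη
  calc ν A ≤ t + η + η + s * ν univ :=
        measure_le_add_of_forall_lintegral_le hmaj hne hFF' hF hs.ne' hn
    _ ≤ t + η + η + η := by gcongr
    _ = t + ε := by rw [add_assoc, add_assoc, ← ENNReal.coe_add, ← ENNReal.coe_add, ← add_assoc,
          add_thirds]

/-- a finite measure `ν` majorized by the capacity of `K` is the upper envelope of
the measures in the cone `⋃_{n≥1} n·K` that are dominated by `ν`. -/
theorem stmt_5 {X : Type*} [MetricSpace X] [CompactSpace X]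
    [MeasurableSpace X] [BorelSpace X]
    (K : Set (FiniteMeasure X))
    (hne : K.Nonempty)
    (hconv : Convex ℝ≥0 K)
    (hcomp : IsCompact K)
    (hdown : ∀ ν ∈ K, ∀ τ : FiniteMeasure X, (τ : Measure X) ≤ (ν : Measure X) → τ ∈ K)
    (ν : Measure X) [IsFiniteMeasure ν]
    (hmaj : ∀ A : Set X, MeasurableSet A → ν A ≤ ⨆ τ ∈ K, (τ : Measure X) A) :
    ∀ A : Set X, MeasurableSet A →
      ν A = ⨆ (m : Measure X) (_ : (∃ n : ℕ, 1 ≤ n ∧ ∃ κ ∈ K,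
        m = (n : ℝ≥0∞) • (κ : Measure X)) ∧ m ≤ ν), m A :=
  stmt_5_general K hne hconv hcomp hdown ν hmaj
end

section
/- Let f : ℝ₊ → ℝ₊ be nondecreasing with F(t) = ∫₀ᵗ f(s)ds, and let N ≥ 3 be an integer. Suppose y is a C² nonnegative nondecreasing function on a neighborhood of [r₀, r₁], 0 < r₀ < r₁ < ∞, satisfying y''(r) + ((N−1)/r)·y'(r) ≥ f(y(r)) and F(y(r₀)) > 0. Then ∫_{y(r₀)}^{y(r₁)} du/√(2(F(u) − F(y(r₀)))) ≥ (r₀/(N−2))·(1 − r₀^{N−2}/r₁^{N−2}). -/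
/-! With `k = N - 1` and `w r = r ^ k * y' r`, the differential inequality reads
`w' ≥ r ^ k * f (y r)`, hence `(w ^ 2 / 2)' ≥ r₀ ^ (2k) * f (y r) * y' r` on `[r₀, r₁]`.
Integrating, with the chain rule for `F ∘ y` supplied by the change of variables for monotone
maps, gives `r ^ k * y' r ≥ r₀ ^ k * √(2 (F (y r) - F (y r₀)))`. Dividing by the square root and
substituting `u = y r` bounds the integral below by `∫ r₀ ^ k / r ^ k dr` over `[r₀, r₁]`, which is
the right-hand side. Division is legitimate because `F (y r₀) > 0` forces `f (y r₀) > 0`, so the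
inequality prevents `y` from being constant to the right of `r₀`. -/

open MeasureTheory Set

section MonotonePrimitive

variable {f F : ℝ → ℝ} {u v : ℝ}

lemma intervalIntegrable_of_monotoneOn_Ici (hf : MonotoneOn f (Ici 0)) (hu : 0 ≤ u)
    (hv : 0 ≤ v) : IntervalIntegrable f volume u v :=
  (hf.mono fun _ hx ↦ le_trans (le_min hu hv) hx.1).intervalIntegrable

variable (hf : MonotoneOn f (Ici 0)) (hF : ∀ t, F t = ∫ s in (0 : ℝ)..t, f s)
include hf hF

lemma primitive_sub_eq_integral (hv : 0 ≤ v) (hu : 0 ≤ u) : F u - F v = ∫ s in v..u, f s := by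
  rw [hF, hF, intervalIntegral.integral_interval_sub_left
    (intervalIntegrable_of_monotoneOn_Ici hf le_rfl hu)
    (intervalIntegrable_of_monotoneOn_Ici hf le_rfl hv)]

lemma mul_sub_le_primitive_sub (hv : 0 ≤ v) (hvu : v ≤ u) : f v * (u - v) ≤ F u - F v := by
  rw [primitive_sub_eq_integral hf hF hv (hv.trans hvu), mul_comm, ← smul_eq_mul,
    ← intervalIntegral.integral_const]
  exact intervalIntegral.integral_mono_on hvu intervalIntegrable_const
    (intervalIntegrable_of_monotoneOn_Ici hf hv (hv.trans hvu))
    fun x hx ↦ hf hv (hv.trans hx.1) hx.1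

lemma primitive_sub_le_mul_sub (hv : 0 ≤ v) (hvu : v ≤ u) : F u - F v ≤ f u * (u - v) := by
  rw [primitive_sub_eq_integral hf hF hv (hv.trans hvu), mul_comm, ← smul_eq_mul,
    ← intervalIntegral.integral_const]
  exact intervalIntegral.integral_mono_on hvu
    (intervalIntegrable_of_monotoneOn_Ici hf hv (hv.trans hvu)) intervalIntegrable_const
    fun x hx ↦ hf (hv.trans hx.1) (hv.trans hvu) hx.2

lemma pos_of_primitive_pos (hv : 0 ≤ v) (hFv : 0 < F v) : 0 < f v := by
  have h := primitive_sub_le_mul_sub hf hF le_rfl hv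
  rw [hF 0, intervalIntegral.integral_same, sub_zero, sub_zero] at h
  exact pos_of_mul_pos_left (hFv.trans_le h) hv

lemma primitive_lt_primitive (hv : 0 ≤ v) (hfv : 0 < f v) (hvu : v < u) : F v < F u := by
  have := mul_sub_le_primitive_sub hf hF hv hvu.le
  nlinarith [mul_pos hfv (sub_pos.2 hvu)]

lemma continuousOn_primitive_Ici : ContinuousOn F (Ici 0) := by
  intro t (ht : 0 ≤ t)
  have h := intervalIntegral.continuousOn_primitive_interval'
    (intervalIntegrable_of_monotoneOn_Ici hf le_rfl (by linarith : (0 : ℝ) ≤ t + 1)) left_mem_uIcc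
  rw [uIcc_of_le (by linarith)] at h
  refine ((h.congr fun s _ ↦ hF s) t ⟨ht, by linarith⟩).mono_of_mem_nhdsWithin ?_
  exact Filter.mem_of_superset (inter_mem_nhdsWithin _ (Iio_mem_nhds (lt_add_one t)))
    fun s hs ↦ ⟨hs.1, hs.2.le⟩

lemma continuousOn_one_div_sqrt_primitive_sub (hv : 0 ≤ v) (hfv : 0 < f v) :
    ContinuousOn (fun u ↦ 1 / √(2 * (F u - F v))) (Ioi v) := by
  have hF_cont := (continuousOn_primitive_Ici hf hF).mono fun u (hu : v < u) ↦ hv.trans hu.le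
  exact continuousOn_const.div (continuousOn_const.mul (hF_cont.sub continuousOn_const)).sqrt
    fun u hu ↦ (Real.sqrt_pos.2 (by linarith [primitive_lt_primitive hf hF hv hfv hu])).ne'

end MonotonePrimitive

lemma integral_pow_div_pow {m : ℕ} (hm : m ≠ 0) {a b : ℝ} (ha : 0 < a) (hab : a ≤ b) :
    ∫ x in a..b, a ^ (m + 1) / x ^ (m + 1) = a / m * (1 - a ^ m / b ^ m) := by
  have h0 : (0 : ℝ) ∉ uIcc a b := by rw [uIcc_of_le hab]; exact fun h ↦ ha.not_ge h.1
  have hzpow : ∀ x : ℝ, a ^ (m + 1) / x ^ (m + 1) = a ^ (m + 1) * x ^ (-((m : ℤ) + 1)) := by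
    intro x; rw [zpow_neg, ← Nat.cast_succ, zpow_natCast, div_eq_mul_inv]
  simp_rw [hzpow]
  rw [intervalIntegral.integral_const_mul, integral_zpow (Or.inr ⟨by omega, h0⟩)]
  rw [show -((m : ℤ) + 1) + 1 = -m by ring, zpow_neg, zpow_neg, zpow_natCast, zpow_natCast]
  push_cast
  have hm' : (m : ℝ) ≠ 0 := Nat.cast_ne_zero.2 hm
  rw [show -((m : ℝ) + 1) + 1 = -m by ring]
  field_simp
  ring

lemma div_le_one_div_sqrt_mul {p q w D : ℝ} (hp : 0 ≤ p) (hq : 0 < q) (hw : 0 ≤ w) (hD : 0 < D)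
    (h : p ^ 2 * D ≤ (q * w) ^ 2 / 2) : p / q ≤ 1 / √(2 * D) * w := by
  have hsqrt : p * √(2 * D) ≤ q * w := by
    rw [← Real.sqrt_sq hp, ← Real.sqrt_mul (sq_nonneg p),
      ← Real.sqrt_sq (by positivity : 0 ≤ q * w)]
    exact Real.sqrt_le_sqrt (by linarith)
  rw [div_le_iff₀ hq, one_div_mul_eq_div, div_mul_eq_mul_div, le_div_iff₀ (by positivity)]
  linarith

lemma lt_of_subsolution {f y : ℝ → ℝ} {k r₀ r : ℝ} (hr : r₀ < r) (hy : MonotoneOn y (Icc r₀ r))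
    (hsub : ∀ x ∈ Ioo r₀ r, f (y x) ≤ deriv (deriv y) x + k / x * deriv y x)
    (hf : 0 < f (y r₀)) : y r₀ < y r := by
  by_contra! h
  have hconst : ∀ x ∈ Icc r₀ r, y x = y r₀ := fun x hx ↦
    le_antisymm ((hy hx (right_mem_Icc.2 hr.le) hx.2).trans h) (hy (left_mem_Icc.2 hr.le) hx hx.1)
  have hx : (r₀ + r) / 2 ∈ Ioo r₀ r := ⟨by linarith, by linarith⟩
  have hderiv : deriv y =ᶠ[nhds ((r₀ + r) / 2)] fun _ ↦ 0 := by
    filter_upwards [isOpen_Ioo.mem_nhds hx] with z hz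
    have : y =ᶠ[nhds z] fun _ ↦ y r₀ := by
      filter_upwards [isOpen_Ioo.mem_nhds hz] with w hw using hconst w (Ioo_subset_Icc_self hw)
    rw [this.deriv_eq, deriv_const]
  have := hsub _ hx
  rw [hderiv.deriv_eq, deriv_const, hderiv.eq_of_nhds, hconst _ (Ioo_subset_Icc_self hx)] at this
  linarith

lemma primitive_comp_sub_eq_integral {f F y y' : ℝ → ℝ} {s t : ℝ}
    (hf : MonotoneOn f (Ici 0)) (hF : ∀ t, F t = ∫ s in (0 : ℝ)..t, f s) (hst : s ≤ t)
    (hyc : ContinuousOn y (Icc s t)) (hy : ∀ x ∈ Ioo s t, HasDerivAt y (y' x) x)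
    (hy' : ∀ x ∈ Ioo s t, 0 ≤ y' x) (hys : 0 ≤ y s) (hyt : 0 ≤ y t) :
    F (y t) - F (y s) = ∫ x in s..t, f (y x) * y' x := by
  rw [primitive_sub_eq_integral hf hF hys hyt]
  have hI : Ioo (min s t) (max s t) = Ioo s t := by rw [min_eq_left hst, max_eq_right hst]
  rw [← uIcc_of_le hst] at hyc
  rw [← hI] at hy hy'
  exact (intervalIntegral.integral_comp_mul_deriv_of_deriv_nonneg hyc hy hy').symm

lemma hasDerivAt_pow_mul {g : ℝ → ℝ} {g' x : ℝ} (k : ℕ) (hx : x ≠ 0) (hg : HasDerivAt g g' x) :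
    HasDerivAt (fun x ↦ x ^ k * g x) (x ^ k * (g' + k / x * g x)) x := by
  refine ((hasDerivAt_pow k x).fun_mul hg).congr_deriv ?_
  rcases k with _ | k
  · simp
  · rw [Nat.add_sub_cancel]
    field_simp
    ring

lemma monotoneOn_Icc_of_hasDerivAt_nonneg {y y' : ℝ → ℝ} {s t : ℝ}
    (hy : ∀ x ∈ Icc s t, HasDerivAt y (y' x) x) (hy' : ∀ x ∈ Icc s t, 0 ≤ y' x) :
    MonotoneOn y (Icc s t) :=
  monotoneOn_of_hasDerivWithinAt_nonneg (convex_Icc s t)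
    (fun x hx ↦ (hy x hx).continuousAt.continuousWithinAt)
    (by simpa using fun x hx ↦ (hy x (Ioo_subset_Icc_self hx)).hasDerivWithinAt)
    (by simpa using fun x hx ↦ hy' x (Ioo_subset_Icc_self hx))

lemma subsolution_energy_estimate {f F y y' y'' : ℝ → ℝ} {k : ℕ} {r₀ r : ℝ}
    (hf : MonotoneOn f (Ici 0)) (hF : ∀ t, F t = ∫ s in (0 : ℝ)..t, f s)
    (hr₀ : 0 < r₀) (hr : r₀ ≤ r)
    (hy : ∀ x ∈ Icc r₀ r, HasDerivAt y (y' x) x) (hy' : ∀ x ∈ Icc r₀ r, HasDerivAt y' (y'' x) x)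
    (hy'_nonneg : ∀ x ∈ Icc r₀ r, 0 ≤ y' x) (hy₀ : 0 ≤ y r₀) (hf₀ : 0 ≤ f (y r₀))
    (hsub : ∀ x ∈ Icc r₀ r, f (y x) ≤ y'' x + k / x * y' x) :
    (r₀ ^ k) ^ 2 * (F (y r) - F (y r₀)) ≤ (r ^ k * y' r) ^ 2 / 2 := by
  have hyc : ContinuousOn y (Icc r₀ r) := fun x hx ↦ (hy x hx).continuousAt.continuousWithinAt
  have hy_Ioo : ∀ x ∈ Ioo r₀ r, HasDerivAt y (y' x) x := fun x hx ↦ hy x (Ioo_subset_Icc_self hx)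
  have hy'_Ioo : ∀ x ∈ Ioo r₀ r, 0 ≤ y' x := fun x hx ↦ hy'_nonneg x (Ioo_subset_Icc_self hx)
  have hmono := monotoneOn_Icc_of_hasDerivAt_nonneg hy hy'_nonneg
  have hy_ge : ∀ x ∈ Icc r₀ r, y r₀ ≤ y x := fun x hx ↦ hmono (left_mem_Icc.2 hr) hx hx.1
  have hfy : ∀ x ∈ Icc r₀ r, 0 ≤ f (y x) := fun x hx ↦
    hf₀.trans (hf hy₀ (hy₀.trans (hy_ge x hx)) (hy_ge x hx))
  have hyr : 0 ≤ y r := hy₀.trans (hy_ge r (right_mem_Icc.2 hr))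
  have hint : IntervalIntegrable (fun x ↦ f (y x) * y' x) volume r₀ r := by
    have hI : Ioo (min r₀ r) (max r₀ r) = Ioo r₀ r := by rw [min_eq_left hr, max_eq_right hr]
    rw [← uIcc_of_le hr] at hyc
    rw [← hI] at hy_Ioo hy'_Ioo
    exact (intervalIntegral.integrable_comp_mul_deriv_iff_of_deriv_nonneg hyc hy_Ioo hy'_Ioo).2
      (intervalIntegrable_of_monotoneOn_Ici hf hy₀ hyr)
  have hw : ∀ x ∈ Icc r₀ r, HasDerivAt (fun x ↦ (x ^ k * y' x) ^ 2 / 2)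
      ((x ^ k * y' x) * (x ^ k * (y'' x + k / x * y' x))) x := fun x hx ↦
    (((hasDerivAt_pow_mul k (hr₀.trans_le hx.1).ne' (hy' x hx)).pow 2).div_const 2).congr_deriv
      (by ring)
  have hpointwise : ∀ x ∈ Ioo r₀ r, (r₀ ^ k) ^ 2 * (f (y x) * y' x) ≤
      (x ^ k * y' x) * (x ^ k * (y'' x + k / x * y' x)) := fun x hx ↦ by
    have hx := Ioo_subset_Icc_self hx
    calc (r₀ ^ k) ^ 2 * (f (y x) * y' x) ≤ (x ^ k) ^ 2 * (f (y x) * y' x) := by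
          gcongr
          · exact mul_nonneg (hfy x hx) (hy'_nonneg x hx)
          · exact hx.1
      _ = (x ^ k * y' x) * (x ^ k * f (y x)) := by ring
      _ ≤ (x ^ k * y' x) * (x ^ k * (y'' x + k / x * y' x)) := by
          have : 0 ≤ x ^ k := pow_nonneg (hr₀.le.trans hx.1) k
          exact mul_le_mul_of_nonneg_left (mul_le_mul_of_nonneg_left (hsub x hx) this)
            (mul_nonneg this (hy'_nonneg x hx))
  rw [primitive_comp_sub_eq_integral hf hF hr hyc hy_Ioo hy'_Ioo hy₀ hyr,
    ← intervalIntegral.integral_const_mul]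
  calc ∫ x in r₀..r, (r₀ ^ k) ^ 2 * (f (y x) * y' x)
      ≤ (r ^ k * y' r) ^ 2 / 2 - (r₀ ^ k * y' r₀) ^ 2 / 2 :=
        intervalIntegral.integral_le_sub_of_hasDeriv_right_of_le hr
          (fun x hx ↦ (hw x hx).continuousAt.continuousWithinAt)
          (fun x hx ↦ (hw x (Ioo_subset_Icc_self hx)).hasDerivWithinAt)
          ((intervalIntegrable_iff_integrableOn_Icc_of_le hr).1 (hint.const_mul _)) hpointwise
    _ ≤ (r ^ k * y' r) ^ 2 / 2 := by linarith [sq_nonneg (r₀ ^ k * y' r₀)]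

lemma pow_div_pow_le_one_div_sqrt_mul_deriv {f F y : ℝ → ℝ} {k : ℕ} {r₀ r : ℝ}
    (hf : MonotoneOn f (Ici 0)) (hF : ∀ t, F t = ∫ s in (0 : ℝ)..t, f s)
    (hr₀ : 0 < r₀) (hr : r₀ < r) (hy : ∀ x ∈ Icc r₀ r, HasDerivAt y (deriv y x) x)
    (hy' : ∀ x ∈ Icc r₀ r, HasDerivAt (deriv y) (deriv (deriv y) x) x)
    (hy'_nonneg : ∀ x ∈ Icc r₀ r, 0 ≤ deriv y x) (hy₀ : 0 ≤ y r₀) (hf₀ : 0 < f (y r₀))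
    (hsub : ∀ x ∈ Icc r₀ r, f (y x) ≤ deriv (deriv y) x + k / x * deriv y x) :
    r₀ ^ k / r ^ k ≤ 1 / √(2 * (F (y r) - F (y r₀))) * deriv y r := by
  have hgrowth : y r₀ < y r :=
    lt_of_subsolution hr (monotoneOn_Icc_of_hasDerivAt_nonneg hy hy'_nonneg)
      (fun x hx ↦ hsub x (Ioo_subset_Icc_self hx)) hf₀
  exact div_le_one_div_sqrt_mul (by positivity) (pow_pos (hr₀.trans hr) _)
    (hy'_nonneg r (right_mem_Icc.2 hr.le))
    (sub_pos.2 (primitive_lt_primitive hf hF hy₀ hf₀ hgrowth))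
    (subsolution_energy_estimate hf hF hr₀ hr.le hy hy' hy'_nonneg hy₀ hf₀.le hsub)

lemma ofReal_integral_le_lintegral_of_le_comp_mul_deriv {g h y y' : ℝ → ℝ} {s t : ℝ}
    (hst : s ≤ t) (hyc : ContinuousOn y (Icc s t)) (hy : ∀ x ∈ Ioo s t, HasDerivAt y (y' x) x)
    (hy' : ∀ x ∈ Ioo s t, 0 ≤ y' x) (hg_nonneg : ∀ u, 0 ≤ g u)
    (hg : AEStronglyMeasurable g (volume.restrict (Ioc (y s) (y t))))
    (hh : IntervalIntegrable h volume s t) (hhg : ∀ x ∈ Ioo s t, h x ≤ g (y x) * y' x) :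
    ENNReal.ofReal (∫ x in s..t, h x) ≤ ∫⁻ u in Ioc (y s) (y t), ENNReal.ofReal (g u) := by
  have hyst : y s ≤ y t :=
    monotoneOn_of_hasDerivWithinAt_nonneg (convex_Icc s t) hyc
      (by simpa using fun x hx ↦ (hy x hx).hasDerivWithinAt) (by simpa using hy')
      (left_mem_Icc.2 hst) (right_mem_Icc.2 hst) hst
  have hI : Ioo (min s t) (max s t) = Ioo s t := by rw [min_eq_left hst, max_eq_right hst]
  rw [← uIcc_of_le hst] at hyc
  rw [← hI] at hy hy'
  by_cases hgi : IntervalIntegrable g volume (y s) (y t)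
  · have hgy := (intervalIntegral.integrable_comp_mul_deriv_iff_of_deriv_nonneg hyc hy hy').2 hgi
    rw [intervalIntegrable_iff_integrableOn_Ioc_of_le hyst] at hgi
    calc ENNReal.ofReal (∫ x in s..t, h x)
        ≤ ENNReal.ofReal (∫ x in s..t, (g ∘ y) x * y' x) :=
          ENNReal.ofReal_le_ofReal (intervalIntegral.integral_mono_on_of_le_Ioo hst hh hgy hhg)
      _ = ENNReal.ofReal (∫ u in Ioc (y s) (y t), g u) := by
          rw [intervalIntegral.integral_comp_mul_deriv_of_deriv_nonneg hyc hy hy',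
            intervalIntegral.integral_of_le hyst]
      _ = ∫⁻ u in Ioc (y s) (y t), ENNReal.ofReal (g u) :=
          ofReal_integral_eq_lintegral_ofReal hgi (ae_of_all _ hg_nonneg)
  · rw [intervalIntegrable_iff_integrableOn_Ioc_of_le hyst, IntegrableOn, Integrable,
      not_and, hasFiniteIntegral_iff_ofReal (ae_of_all _ hg_nonneg), not_lt, top_le_iff] at hgi
    rw [hgi hg]
    exact le_top

theorem stmt_9_general (N : ℕ) (hN : 3 ≤ N)
    (f : ℝ → ℝ) (hfmono : MonotoneOn f (Set.Ici 0))
    (F : ℝ → ℝ) (hF : ∀ t, F t = ∫ s in (0:ℝ)..t, f s)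
    (r₀ r₁ : ℝ) (hr₀ : 0 < r₀) (hr₀r₁ : r₀ < r₁)
    (y : ℝ → ℝ) (U : Set ℝ) (hU : IsOpen U) (hIcc : Set.Icc r₀ r₁ ⊆ U)
    (hreg : ContDiffOn ℝ 2 y U)
    (hypos : ∀ r ∈ U, 0 ≤ y r) (hymono : MonotoneOn y U)
    (hsub : ∀ r ∈ Set.Icc r₀ r₁,
      f (y r) ≤ deriv (deriv y) r + (((N : ℝ) - 1) / r) * deriv y r)
    (hF0 : 0 < F (y r₀)) :
    ENNReal.ofReal ((r₀ / ((N : ℝ) - 2)) * (1 - r₀ ^ (N - 2) / r₁ ^ (N - 2))) ≤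
      ∫⁻ u in Set.Ioc (y r₀) (y r₁),
        ENNReal.ofReal (1 / Real.sqrt (2 * (F u - F (y r₀)))) := by
  obtain ⟨m, rfl⟩ : ∃ m, N = m + 2 := ⟨N - 2, by omega⟩
  have hsub' : ∀ r ∈ Icc r₀ r₁,
      f (y r) ≤ deriv (deriv y) r + ((m + 1 : ℕ) : ℝ) / r * deriv y r := by
    intro r hr; convert hsub r hr using 4; push_cast; ring
  have hy : ∀ r ∈ U, HasDerivAt y (deriv y r) r := fun r hr ↦
    ((hreg.differentiableOn two_ne_zero).differentiableAt (hU.mem_nhds hr)).hasDerivAt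
  have hy' : ∀ r ∈ U, HasDerivAt (deriv y) (deriv (deriv y) r) r := fun r hr ↦
    (((hreg.deriv_of_isOpen hU (by norm_num)).differentiableOn one_ne_zero).differentiableAt
      (hU.mem_nhds hr)).hasDerivAt
  have hy'_nonneg : ∀ r ∈ U, 0 ≤ deriv y r := fun r hr ↦
    (hy r hr).hasDerivWithinAt.nonneg_of_monotoneOn (hU.preperfect r hr) hymono
  have hy₀ : 0 ≤ y r₀ := hypos r₀ (hIcc (left_mem_Icc.2 hr₀r₁.le))
  have hf₀ : 0 < f (y r₀) := pos_of_primitive_pos hfmono hF hy₀ hF0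
  have hbound : ∀ r ∈ Ioo r₀ r₁, r₀ ^ (m + 1) / r ^ (m + 1) ≤
      1 / √(2 * (F (y r) - F (y r₀))) * deriv y r := fun r hr ↦ by
    have hsubset : Icc r₀ r ⊆ U := (Icc_subset_Icc_right hr.2.le).trans hIcc
    exact pow_div_pow_le_one_div_sqrt_mul_deriv hfmono hF hr₀ hr.1
      (fun x hx ↦ hy x (hsubset hx)) (fun x hx ↦ hy' x (hsubset hx))
      (fun x hx ↦ hy'_nonneg x (hsubset hx)) hy₀ hf₀
      (fun x hx ↦ hsub' x ⟨hx.1, hx.2.trans hr.2.le⟩)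
  have hφ : AEStronglyMeasurable (fun u ↦ 1 / √(2 * (F u - F (y r₀))))
      (volume.restrict (Ioc (y r₀) (y r₁))) :=
    ((continuousOn_one_div_sqrt_primitive_sub hfmono hF hy₀ hf₀).mono
      Ioc_subset_Ioi_self).aestronglyMeasurable measurableSet_Ioc
  have hpow : IntervalIntegrable (fun r ↦ r₀ ^ (m + 1) / r ^ (m + 1)) volume r₀ r₁ :=
    (continuousOn_const.div (continuous_pow _).continuousOn fun x hx ↦
      pow_ne_zero _ (hr₀.trans_le (uIcc_of_le hr₀r₁.le ▸ hx).1).ne').intervalIntegrable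
  calc ENNReal.ofReal (r₀ / (((m + 2 : ℕ) : ℝ) - 2) * (1 - r₀ ^ (m + 2 - 2) / r₁ ^ (m + 2 - 2)))
      = ENNReal.ofReal (∫ r in r₀..r₁, r₀ ^ (m + 1) / r ^ (m + 1)) := by
        rw [integral_pow_div_pow (by omega) hr₀ hr₀r₁.le, Nat.add_sub_cancel]
        push_cast; ring_nf
    _ ≤ _ := ofReal_integral_le_lintegral_of_le_comp_mul_deriv hr₀r₁.le
        (fun x hx ↦ (hy x (hIcc hx)).continuousAt.continuousWithinAt)
        (fun x hx ↦ hy x (hIcc (Ioo_subset_Icc_self hx)))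
        (fun x hx ↦ hy'_nonneg x (hIcc (Ioo_subset_Icc_self hx)))
        (fun u ↦ by positivity) hφ hpow hbound

/-- Lemma A.4, smooth case: a nonnegative nondecreasing `C²` subsolution of
`y'' + ((N−1)/r) y' = f(y)` on a neighborhood of `[r₀, r₁]` with `F(y r₀) > 0` satisfies
`∫_{y r₀}^{y r₁} du/√(2(F u − F(y r₀))) ≥ (r₀/(N−2)) (1 − r₀^{N−2}/r₁^{N−2})`. -/
theorem stmt_9 (N : ℕ) (hN : 3 ≤ N)
    (f : ℝ → ℝ) (hfpos : ∀ t, 0 ≤ t → 0 ≤ f t) (hfmono : MonotoneOn f (Set.Ici 0))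
    (F : ℝ → ℝ) (hF : ∀ t, F t = ∫ s in (0:ℝ)..t, f s)
    (r₀ r₁ : ℝ) (hr₀ : 0 < r₀) (hr₀r₁ : r₀ < r₁)
    (y : ℝ → ℝ) (U : Set ℝ) (hU : IsOpen U) (hIcc : Set.Icc r₀ r₁ ⊆ U)
    (hreg : ContDiffOn ℝ 2 y U)
    (hypos : ∀ r ∈ U, 0 ≤ y r) (hymono : MonotoneOn y U)
    (hsub : ∀ r ∈ Set.Icc r₀ r₁,
      f (y r) ≤ deriv (deriv y) r + (((N : ℝ) - 1) / r) * deriv y r)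
    (hF0 : 0 < F (y r₀)) :
    ENNReal.ofReal ((r₀ / ((N : ℝ) - 2)) * (1 - r₀ ^ (N - 2) / r₁ ^ (N - 2))) ≤
      ∫⁻ u in Set.Ioc (y r₀) (y r₁),
        ENNReal.ofReal (1 / Real.sqrt (2 * (F u - F (y r₀)))) :=
  stmt_9_general N hN f hfmono F hF r₀ r₁ hr₀ hr₀r₁ y U hU hIcc hreg hypos hymono hsub hF0
end

section
/- Let f : ℝ₊ → ℝ₊ be nondecreasing with F(t) = ∫₀ᵗ f(s)ds and N ≥ 3. If there exists a nonnegative nondecreasing C² subsolution y of y'' + ((N−1)/r)y' = f(y) on (0,T) with F(y(0+)) > 0, then ((2^{N−2} − 1)/((N−2)·2^{N−2}))·T ≤ √2·∫_{y(0+)}^∞ du/√(F(u) − F(y(0+))). -/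
/-!
Put `u r = r ^ (N - 1) * y' r`. The subsolution inequality reads `u' ≥ r ^ (N - 1) * f (y r)`, so
on `[T/2, T)` the energy `(u²)' = 2 u u'` dominates `2 (T/2) ^ (2(N - 1)) (F ∘ y)'`; integrating,
`y' r ≥ (T/2) ^ (N - 1) r ^ (1 - N) √(2 (F (y r) - F (y (T/2))))`. Dividing by the square root and
substituting `v = y r` bounds `∫_{T/2}^T 2 (T/2) ^ (N - 1) r ^ (1 - N) dr`, which is the left-hand
side, by `√2 ∫_{y(T/2)}^∞ dv / √(F v - F (y (T/2)))`; as `f` is nondecreasing, this integral only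
grows when the base point `y (T/2)` is lowered to `y(0+)`.

`F (y(0+)) > 0` makes `f (y r) > 0`, which keeps `y' > 0`: a zero of `y' ≥ 0` is a minimum of `y'`,
where `y'' = 0` contradicts the subsolution inequality.
-/

open MeasureTheory Filter Topology Set intervalIntegral
open scoped ENNReal

theorem MonotoneOn.mul_sub_le_intervalIntegral {f : ℝ → ℝ} {a b : ℝ} (hf : MonotoneOn f (Ici a))
    (hab : a ≤ b) : f a * (b - a) ≤ ∫ s in a..b, f s := by
  have hsub : uIcc a b ⊆ Ici a := by rw [uIcc_of_le hab]; exact Icc_subset_Ici_self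
  calc f a * (b - a) = ∫ _ in a..b, f a := by simp [mul_comm]
    _ ≤ ∫ s in a..b, f s :=
      integral_mono_on hab intervalIntegrable_const (hf.mono hsub).intervalIntegrable
        fun s hs => hf self_mem_Ici hs.1 hs.1

theorem MonotoneOn.pos_of_intervalIntegral_pos {f : ℝ → ℝ} {a b : ℝ}
    (hf : MonotoneOn f (Icc a b)) (hab : a ≤ b) (h : 0 < ∫ s in a..b, f s) : 0 < f b := by
  by_contra! hb
  have : ∫ s in a..b, f s ≤ ∫ _ in a..b, f b :=
    integral_mono_on hab (hf.mono (by rw [uIcc_of_le hab])).intervalIntegrable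
      intervalIntegrable_const fun s hs => hf hs (right_mem_Icc.2 hab) hs.2
  rw [intervalIntegral.integral_const, smul_eq_mul] at this
  nlinarith

theorem lintegral_inv_sqrt_intervalIntegral_le {f : ℝ → ℝ} {a b : ℝ} (hf : MonotoneOn f (Ici a))
    (hfa : 0 < f a) (hab : a ≤ b) :
    ∫⁻ v in Ioi b, ENNReal.ofReal (1 / √(∫ s in b..v, f s)) ≤
      ∫⁻ v in Ioi a, ENNReal.ofReal (1 / √(∫ s in a..v, f s)) := by
  set c := b - a
  have hc : 0 ≤ c := sub_nonneg.2 hab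
  have htranslate : ∫⁻ v in Ioi b, ENNReal.ofReal (1 / √(∫ s in b..v, f s)) =
      ∫⁻ v in Ioi a, ENNReal.ofReal (1 / √(∫ s in b..v + c, f s)) := by
    rw [(measurePreserving_add_right volume c).setLIntegral_comp_emb
      (measurableEmbedding_addRight c) (fun w => ENNReal.ofReal (1 / √(∫ s in b..w, f s))),
      image_add_const_Ioi, add_sub_cancel]
  rw [htranslate]
  refine setLIntegral_mono' measurableSet_Ioi fun v hv => ENNReal.ofReal_le_ofReal ?_
  have hpos : 0 < ∫ s in a..v, f s :=
    (mul_pos hfa (sub_pos.2 hv)).trans_le (hf.mul_sub_le_intervalIntegral hv.le)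
  have hle : ∫ s in a..v, f s ≤ ∫ s in b..v + c, f s := by
    have hsub : uIcc a v ⊆ Ici a := by rw [uIcc_of_le hv.le]; exact Icc_subset_Ici_self
    rw [← add_sub_cancel a b, ← integral_comp_add_right]
    have hshift : MonotoneOn (fun s => f (s + c)) (uIcc a v) := by
      intro s hs t ht hst
      have has : a ≤ s := hsub hs
      have hat : a ≤ t := hsub ht
      exact hf (show a ≤ s + c by linarith) (show a ≤ t + c by linarith) (by linarith)
    refine integral_mono_on hv.le (hf.mono hsub).intervalIntegrable hshift.intervalIntegrable
      fun s hs => hf hs.1 (by simp only [mem_Ici]; linarith [hs.1]) (by linarith)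
  exact one_div_le_one_div_of_le (Real.sqrt_pos.2 hpos) (Real.sqrt_le_sqrt hle)

theorem lintegral_Ioo_half_div_pow (n : ℕ) (hn : n ≠ 0) {T : ℝ} (hT : 0 < T) :
    ∫⁻ ρ in Ioo (T / 2) T, ENNReal.ofReal (2 * (T / 2) ^ (n + 1) / ρ ^ (n + 1)) =
      ENNReal.ofReal ((2 ^ n - 1) / (n * 2 ^ n) * T) := by
  set P := 2 * (T / 2) ^ (n + 1)
  have hT2 : 0 < T / 2 := by positivity
  have hpos : ∀ ρ ∈ Icc (T / 2) T, 0 < ρ := fun ρ hρ => hT2.trans_le hρ.1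
  have hderiv : ∀ ρ ∈ uIcc (T / 2) T, HasDerivAt (fun ρ : ℝ => -(P / n) * (ρ ^ n)⁻¹)
      (P / ρ ^ (n + 1)) ρ := by
    intro ρ hρ
    rw [uIcc_of_le (by linarith)] at hρ
    have hρ0 := (hpos ρ hρ).ne'
    refine (((hasDerivAt_pow n ρ).inv (pow_ne_zero n hρ0)).const_mul (-(P / n))).congr_deriv ?_
    obtain ⟨m, rfl⟩ : ∃ m, n = m + 1 := ⟨n - 1, by omega⟩
    simp only [Nat.add_sub_cancel]
    field_simp
    ring
  have hcont : ContinuousOn (fun ρ : ℝ => P / ρ ^ (n + 1)) (Icc (T / 2) T) :=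
    continuousOn_const.div (continuousOn_pow _) fun ρ hρ => pow_ne_zero _ (hpos ρ hρ).ne'
  have hint : ∫ ρ in T / 2..T, P / ρ ^ (n + 1) = (2 ^ n - 1) / (n * 2 ^ n) * T := by
    rw [integral_eq_sub_of_hasDerivAt hderiv
      ((hcont.mono (by rw [uIcc_of_le (by linarith)])).intervalIntegrable)]
    have hn' : (n : ℝ) ≠ 0 := Nat.cast_ne_zero.2 hn
    simp only [P, div_pow, pow_succ]
    field_simp
    ring
  rw [← hint, integral_of_le (by linarith), integral_Ioc_eq_integral_Ioo,
    ofReal_integral_eq_lintegral_ofReal ((hcont.integrableOn_Icc).mono_set Ioo_subset_Icc_self)]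
  filter_upwards [ae_restrict_mem measurableSet_Ioo] with ρ hρ
  exact div_nonneg (by positivity) (pow_pos (hpos ρ (Ioo_subset_Icc_self hρ)) _).le

theorem HasDerivAt.pow_mul {φ : ℝ → ℝ} {t φ' : ℝ} (n : ℕ) (ht : t ≠ 0) (h : HasDerivAt φ φ' t) :
    HasDerivAt (fun s => s ^ n * φ s) (t ^ n * (φ' + n / t * φ t)) t := by
  refine ((hasDerivAt_pow n t).mul h).congr_deriv ?_
  rcases n with _ | m
  · simp
  · simp only [Nat.add_sub_cancel, pow_succ]
    field_simp
    ring

theorem pos_of_eventually_nonneg_of_hasDerivAt {φ : ℝ → ℝ} {x φ' c : ℝ}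
    (hφ : ∀ᶠ t in 𝓝 x, 0 ≤ φ t) (hd : HasDerivAt φ φ' x) (h : 0 < φ' + c * φ x) : 0 < φ x := by
  refine hφ.self_of_nhds.lt_of_ne fun h0 => ?_
  have hmin : IsLocalMin φ x := hφ.mono fun t ht => h0 ▸ ht
  rw [hmin.hasDerivAt_eq_zero hd, ← h0] at h
  simp at h

theorem ContDiffOn.hasDerivAt_deriv {y : ℝ → ℝ} {s : Set ℝ} {t : ℝ} (hy : ContDiffOn ℝ 2 y s)
    (hs : IsOpen s) (ht : t ∈ s) :
    HasDerivAt y (deriv y t) t ∧ HasDerivAt (deriv y) (deriv (deriv y) t) t := by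
  have hy' : ContDiffOn ℝ 1 (deriv y) s := hy.deriv_of_isOpen hs (by norm_num)
  exact ⟨((hy.differentiableOn (by norm_num)).differentiableAt (hs.mem_nhds ht)).hasDerivAt,
    ((hy'.differentiableOn (by norm_num)).differentiableAt (hs.mem_nhds ht)).hasDerivAt⟩

theorem two_mul_sq_mul_integral_le_sq_pow_mul {f y y' u' : ℝ → ℝ} {a r : ℝ} (n : ℕ) (ha : 0 ≤ a)
    (har : a ≤ r) (hy : ∀ t ∈ Icc a r, HasDerivAt y (y' t) t) (hy' : ∀ t ∈ Icc a r, 0 ≤ y' t)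
    (hu : ∀ t ∈ Icc a r, HasDerivAt (fun s => s ^ n * y' s) (u' t) t)
    (hsub : ∀ t ∈ Ioo a r, t ^ n * f (y t) ≤ u' t) (hfy : ∀ t ∈ Ioo a r, 0 ≤ f (y t))
    (hf : IntervalIntegrable f volume (y a) (y r)) :
    2 * (a ^ n) ^ 2 * ∫ v in y a..y r, f v ≤ (r ^ n * y' r) ^ 2 := by
  have hIoo : Ioo (min a r) (max a r) = Ioo a r := by rw [min_eq_left har, max_eq_right har]
  have hycont : ContinuousOn y (uIcc a r) := by
    rw [uIcc_of_le har]; exact fun t ht => (hy t ht).continuousAt.continuousWithinAt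
  have hy_Ioo : ∀ t ∈ Ioo (min a r) (max a r), HasDerivAt y (y' t) t := by
    rw [hIoo]; exact fun t ht => hy t (Ioo_subset_Icc_self ht)
  have hy'_Ioo : ∀ t ∈ Ioo (min a r) (max a r), 0 ≤ y' t := by
    rw [hIoo]; exact fun t ht => hy' t (Ioo_subset_Icc_self ht)
  have hchange : ∫ t in a..r, f (y t) * y' t = ∫ v in y a..y r, f v :=
    integral_comp_mul_deriv_of_deriv_nonneg hycont hy_Ioo hy'_Ioo
  have hint : IntervalIntegrable (fun t => f (y t) * y' t) volume a r :=
    (integrable_comp_mul_deriv_iff_of_deriv_nonneg hycont hy_Ioo hy'_Ioo).2 hf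
  have hFTC : ∫ t in a..r, 2 * (a ^ n) ^ 2 * (f (y t) * y' t) ≤
      (r ^ n * y' r) ^ 2 - (a ^ n * y' a) ^ 2 := by
    refine integral_le_sub_of_hasDeriv_right_of_le har
      (fun t ht => ((hu t ht).continuousAt.pow 2).continuousWithinAt)
      (fun t ht => ((hu t (Ioo_subset_Icc_self ht)).pow 2).hasDerivWithinAt)
      ((intervalIntegrable_iff_integrableOn_Icc_of_le har).1 (hint.const_mul _)) fun t ht => ?_
    have hpow : a ^ n ≤ t ^ n := pow_le_pow_left₀ ha ht.1.le n
    have htn : 0 ≤ t ^ n := pow_nonneg (ha.trans ht.1.le) n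
    have hpow_sq : (a ^ n) ^ 2 ≤ t ^ n * t ^ n := by
      rw [sq]; exact mul_le_mul hpow hpow (pow_nonneg ha n) htn
    have hy't := hy' t (Ioo_subset_Icc_self ht)
    calc 2 * (a ^ n) ^ 2 * (f (y t) * y' t)
        ≤ 2 * (t ^ n * y' t) * (t ^ n * f (y t)) := by
          nlinarith [mul_le_mul_of_nonneg_right hpow_sq (mul_nonneg (hfy t ht) hy't)]
      _ ≤ 2 * (t ^ n * y' t) * u' t :=
          mul_le_mul_of_nonneg_left (hsub t ht) (mul_nonneg zero_le_two (mul_nonneg htn hy't))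
      _ = _ := by norm_num
  rw [intervalIntegral.integral_const_mul, hchange] at hFTC
  nlinarith [sq_nonneg (a ^ n * y' a)]

theorem MonotoneOn.deriv_nonneg_of_isOpen {g : ℝ → ℝ} {s : Set ℝ} {x : ℝ} (hg : MonotoneOn g s)
    (hs : IsOpen s) (hx : x ∈ s) : 0 ≤ deriv g x := by
  rw [← derivWithin_of_isOpen hs hx]
  exact hg.derivWithin_nonneg

theorem two_mul_div_le_sqrt_two_mul_div_sqrt {P q d I : ℝ} (hP : 0 ≤ P) (hq : 0 < q) (hd : 0 ≤ d)
    (hI : 0 < I) (h : 2 * P ^ 2 * I ≤ (q * d) ^ 2) : 2 * P / q ≤ √2 * (d * (1 / √I)) := by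
  have hs : √2 ^ 2 = 2 := Real.sq_sqrt zero_le_two
  have hr : √I ^ 2 = I := Real.sq_sqrt hI.le
  have hrpos : 0 < √I := Real.sqrt_pos.2 hI
  have hbound : √2 * P * √I ≤ q * d :=
    (pow_le_pow_iff_left₀ (by positivity) (by positivity) two_ne_zero).1
      (by rw [mul_pow, mul_pow, hs, hr]; linarith)
  rw [div_le_iff₀ hq, show √2 * (d * (1 / √I)) * q = √2 * (q * d) / √I by field_simp,
    le_div_iff₀ hrpos]
  have h2 : √2 * (√2 * P * √I) = (√2 * √2) * P * √I := by ring
  rw [Real.mul_self_sqrt zero_le_two] at h2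
  linarith [mul_le_mul_of_nonneg_left hbound (Real.sqrt_nonneg 2)]

section Subsolution

variable {f y : ℝ → ℝ} {T : ℝ}

theorem deriv_pos_of_subsolution {c r : ℝ} (hreg : ContDiffOn ℝ 2 y (Ioo 0 T))
    (hymono : MonotoneOn y (Ioo 0 T)) (hr : r ∈ Ioo 0 T)
    (hsub : f (y r) ≤ deriv (deriv y) r + c / r * deriv y r) (hf : 0 < f (y r)) :
    0 < deriv y r :=
  pos_of_eventually_nonneg_of_hasDerivAt
    (eventually_of_mem (isOpen_Ioo.mem_nhds hr) fun _ ht =>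
      hymono.deriv_nonneg_of_isOpen isOpen_Ioo ht)
    (hreg.hasDerivAt_deriv isOpen_Ioo hr).2 (hf.trans_le hsub)

theorem two_mul_sq_mul_integral_le_of_subsolution (n : ℕ) (hreg : ContDiffOn ℝ 2 y (Ioo 0 T))
    (hymono : MonotoneOn y (Ioo 0 T))
    (hsub : ∀ r ∈ Ioo 0 T, f (y r) ≤ deriv (deriv y) r + n / r * deriv y r)
    {a r : ℝ} (ha : 0 < a) (har : a ≤ r) (hr : r < T) (hf : ∀ t ∈ Ioo a r, 0 ≤ f (y t))
    (hfint : IntervalIntegrable f volume (y a) (y r)) :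
    2 * (a ^ n) ^ 2 * ∫ v in y a..y r, f v ≤ (r ^ n * deriv y r) ^ 2 := by
  have hIcc : Icc a r ⊆ Ioo 0 T := Icc_subset_Ioo ha hr
  have hderiv := fun t (ht : t ∈ Icc a r) => hreg.hasDerivAt_deriv isOpen_Ioo (hIcc ht)
  refine two_mul_sq_mul_integral_le_sq_pow_mul n ha.le har (fun t ht => (hderiv t ht).1)
    (fun t ht => hymono.deriv_nonneg_of_isOpen isOpen_Ioo (hIcc ht))
    (fun t ht => (hderiv t ht).2.pow_mul n (ha.trans_le ht.1).ne') (fun t ht => ?_) hf hfint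
  exact mul_le_mul_of_nonneg_left (hsub t (hIcc (Ioo_subset_Icc_self ht)))
    (pow_nonneg (ha.trans ht.1).le n)

theorem ofReal_le_sqrt_two_mul_lintegral_of_subsolution (n : ℕ) (hn : n ≠ 0) (hT : 0 < T)
    (hreg : ContDiffOn ℝ 2 y (Ioo 0 T)) (hymono : MonotoneOn y (Ioo 0 T))
    (hsub : ∀ r ∈ Ioo 0 T, f (y r) ≤ deriv (deriv y) r + ((n + 1 : ℕ) : ℝ) / r * deriv y r)
    (hfmono : MonotoneOn f (Ici (y (T / 2)))) (hfpos : 0 < f (y (T / 2))) :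
    ENNReal.ofReal ((2 ^ n - 1) / (n * 2 ^ n) * T) ≤ ENNReal.ofReal √2 *
      ∫⁻ v in Ioi (y (T / 2)), ENNReal.ofReal (1 / √(∫ s in y (T / 2)..v, f s)) := by
  set a := T / 2
  have ha : 0 < a := by positivity
  have haT : a < T := by simp only [a]; linarith
  have hIco : Ico a T ⊆ Ioo 0 T := Ico_subset_Ioo_left ha
  have hderiv := fun t (ht : t ∈ Ioo 0 T) => hreg.hasDerivAt_deriv isOpen_Ioo ht
  have hya : ∀ r ∈ Ico a T, y a ≤ y r := fun r hr =>
    hymono (hIco (left_mem_Ico.2 haT)) (hIco hr) hr.1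
  have hfy : ∀ r ∈ Ico a T, f (y a) ≤ f (y r) := fun r hr =>
    hfmono self_mem_Ici (hya r hr) (hya r hr)
  have hy'pos : ∀ r ∈ Ioo a T, 0 < deriv y r := fun r hr =>
    have hr' := Ioo_subset_Ico_self hr
    deriv_pos_of_subsolution hreg hymono (hIco hr') (hsub r (hIco hr'))
      (hfpos.trans_le (hfy r hr'))
  have hstrict : StrictMonoOn y (Ico a T) :=
    strictMonoOn_of_deriv_pos (convex_Ico a T)
      (fun t ht => (hderiv t (hIco ht)).1.continuousAt.continuousWithinAt)
      (by rwa [interior_Ico])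
  have hpoint : ∀ ρ ∈ Ioo a T, ENNReal.ofReal (2 * a ^ (n + 1) / ρ ^ (n + 1)) ≤
      ENNReal.ofReal √2 * (ENNReal.ofReal (deriv y ρ) *
        ENNReal.ofReal (1 / √(∫ s in y a..y ρ, f s))) := by
    intro ρ hρ
    have hyρ : y a < y ρ := hstrict (left_mem_Ico.2 haT) (Ioo_subset_Ico_self hρ) hρ.1
    have hIpos : 0 < ∫ s in y a..y ρ, f s :=
      (mul_pos hfpos (sub_pos.2 hyρ)).trans_le (hfmono.mul_sub_le_intervalIntegral hyρ.le)
    have henergy := two_mul_sq_mul_integral_le_of_subsolution (n + 1) hreg hymono hsub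
      ha hρ.1.le hρ.2
      (fun t ht => hfpos.le.trans (hfy t ⟨ht.1.le, ht.2.trans hρ.2⟩))
      (hfmono.mono (by rw [uIcc_of_le hyρ.le]; exact Icc_subset_Ici_self)).intervalIntegrable
    rw [← ENNReal.ofReal_mul (hy'pos ρ hρ).le, ← ENNReal.ofReal_mul (Real.sqrt_nonneg 2)]
    exact ENNReal.ofReal_le_ofReal (two_mul_div_le_sqrt_two_mul_div_sqrt (by positivity)
      (pow_pos (ha.trans hρ.1) _) (hy'pos ρ hρ).le hIpos henergy)
  calc ENNReal.ofReal ((2 ^ n - 1) / (n * 2 ^ n) * T)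
      = ∫⁻ ρ in Ioo a T, ENNReal.ofReal (2 * a ^ (n + 1) / ρ ^ (n + 1)) :=
        (lintegral_Ioo_half_div_pow n hn hT).symm
    _ ≤ ∫⁻ ρ in Ioo a T, ENNReal.ofReal √2 * (ENNReal.ofReal (deriv y ρ) *
          ENNReal.ofReal (1 / √(∫ s in y a..y ρ, f s))) :=
        setLIntegral_mono' measurableSet_Ioo hpoint
    _ = ENNReal.ofReal √2 * ∫⁻ v in y '' Ioo a T, ENNReal.ofReal (1 / √(∫ s in y a..v, f s)) := by
        rw [lintegral_const_mul' _ _ ENNReal.ofReal_ne_top,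
          lintegral_image_eq_lintegral_deriv_mul_of_monotoneOn measurableSet_Ioo
            (fun t ht => (hderiv t (hIco (Ioo_subset_Ico_self ht))).1.hasDerivWithinAt)
            (hstrict.monotoneOn.mono Ioo_subset_Ico_self)]
    _ ≤ ENNReal.ofReal √2 *
          ∫⁻ v in Ioi (y a), ENNReal.ofReal (1 / √(∫ s in y a..v, f s)) := by
        refine mul_le_mul_right (lintegral_mono_set ?_) _
        rintro _ ⟨ρ, hρ, rfl⟩
        exact hstrict (left_mem_Ico.2 haT) (Ioo_subset_Ico_self hρ) hρ.1

end Subsolution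

theorem stmt_10_general (N : ℕ) (hN : 3 ≤ N)
    (f : ℝ → ℝ) (hfmono : MonotoneOn f (Set.Ici 0))
    (F : ℝ → ℝ) (hF : ∀ t, F t = ∫ s in (0:ℝ)..t, f s)
    (T : ℝ) (hT : 0 < T)
    (y : ℝ → ℝ) (hreg : ContDiffOn ℝ 2 y (Set.Ioo 0 T))
    (hypos : ∀ r ∈ Set.Ioo (0:ℝ) T, 0 ≤ y r) (hymono : MonotoneOn y (Set.Ioo 0 T))
    (hsub : ∀ r ∈ Set.Ioo (0:ℝ) T,
      f (y r) ≤ deriv (deriv y) r + (((N : ℝ) - 1) / r) * deriv y r)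
    (y0 : ℝ) (hy0 : Tendsto y (nhdsWithin 0 (Set.Ioi 0)) (nhds y0))
    (hF0 : 0 < F y0) :
    ENNReal.ofReal (((2 ^ (N - 2) - 1 : ℝ) / (((N : ℝ) - 2) * 2 ^ (N - 2))) * T) ≤
      ENNReal.ofReal (Real.sqrt 2) *
        ∫⁻ u in Set.Ioi y0, ENNReal.ofReal (1 / Real.sqrt (F u - F y0)) := by
  obtain ⟨n, rfl⟩ : ∃ n, N = n + 2 := ⟨N - 2, by omega⟩
  have hint : ∀ u, 0 ≤ u → IntervalIntegrable f volume 0 u := fun u hu =>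
    (hfmono.mono (by rw [uIcc_of_le hu]; exact Icc_subset_Ici_self)).intervalIntegrable
  have hy0_nonneg : 0 ≤ y0 := ge_of_tendsto hy0 <| by
    filter_upwards [Ioo_mem_nhdsGT hT] with s hs using hypos s hs
  have hy0_le : y0 ≤ y (T / 2) := le_of_tendsto hy0 <| by
    filter_upwards [Ioo_mem_nhdsGT (by positivity : (0 : ℝ) < T / 2)] with s hs
    exact hymono ⟨hs.1, hs.2.trans (by linarith)⟩ ⟨by positivity, by linarith⟩ hs.2.le
  have hfy0 : 0 < f y0 :=
    (hfmono.mono Icc_subset_Ici_self).pos_of_intervalIntegral_pos hy0_nonneg (hF y0 ▸ hF0)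
  have hcoef : ((n + 2 : ℕ) : ℝ) - 1 = ((n + 1 : ℕ) : ℝ) := by push_cast; ring
  calc ENNReal.ofReal ((2 ^ (n + 2 - 2) - 1 : ℝ) / (((n + 2 : ℕ) - 2) * 2 ^ (n + 2 - 2)) * T)
      = ENNReal.ofReal ((2 ^ n - 1) / (n * 2 ^ n) * T) := by
        simp only [Nat.add_sub_cancel]; push_cast; ring_nf
    _ ≤ ENNReal.ofReal √2 *
          ∫⁻ v in Ioi (y (T / 2)), ENNReal.ofReal (1 / √(∫ s in y (T / 2)..v, f s)) :=
        ofReal_le_sqrt_two_mul_lintegral_of_subsolution n (by omega) hT hreg hymono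
          (fun r hr => hcoef ▸ hsub r hr) (hfmono.mono (Ici_subset_Ici.2 (hy0_nonneg.trans hy0_le)))
          (hfy0.trans_le (hfmono hy0_nonneg (hy0_nonneg.trans hy0_le) hy0_le))
    _ ≤ ENNReal.ofReal √2 * ∫⁻ v in Ioi y0, ENNReal.ofReal (1 / √(∫ s in y0..v, f s)) :=
        mul_le_mul_right (lintegral_inv_sqrt_intervalIntegral_le
          (hfmono.mono (Ici_subset_Ici.2 hy0_nonneg)) hfy0 hy0_le) _
    _ = ENNReal.ofReal √2 * ∫⁻ u in Ioi y0, ENNReal.ofReal (1 / √(F u - F y0)) := by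
        refine congrArg _ (setLIntegral_congr_fun measurableSet_Ioi fun u hu => ?_)
        rw [hF, hF,
          integral_interval_sub_left (hint u (hy0_nonneg.trans hu.le)) (hint y0 hy0_nonneg)]

/-- Corollary A.5: existence of a nonnegative nondecreasing subsolution `y` of
`y'' + ((N−1)/r) y' = f(y)` on `(0,T)` with `F(y(0+)) > 0` forces
`((2^{N−2} − 1)/((N−2) 2^{N−2})) T ≤ √2 ∫_{y(0+)}^∞ du/√(F u − F(y(0+)))`. -/
theorem stmt_10 (N : ℕ) (hN : 3 ≤ N)
    (f : ℝ → ℝ) (hfpos : ∀ t, 0 ≤ t → 0 ≤ f t) (hfmono : MonotoneOn f (Set.Ici 0))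
    (F : ℝ → ℝ) (hF : ∀ t, F t = ∫ s in (0:ℝ)..t, f s)
    (T : ℝ) (hT : 0 < T)
    (y : ℝ → ℝ) (hreg : ContDiffOn ℝ 2 y (Set.Ioo 0 T))
    (hypos : ∀ r ∈ Set.Ioo (0:ℝ) T, 0 ≤ y r) (hymono : MonotoneOn y (Set.Ioo 0 T))
    (hsub : ∀ r ∈ Set.Ioo (0:ℝ) T,
      f (y r) ≤ deriv (deriv y) r + (((N : ℝ) - 1) / r) * deriv y r)
    (y0 : ℝ) (hy0 : Tendsto y (nhdsWithin 0 (Set.Ioi 0)) (nhds y0))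
    (hF0 : 0 < F y0) :
    ENNReal.ofReal (((2 ^ (N - 2) - 1 : ℝ) / (((N : ℝ) - 2) * 2 ^ (N - 2))) * T) ≤
      ENNReal.ofReal (Real.sqrt 2) *
        ∫⁻ u in Set.Ioi y0, ENNReal.ofReal (1 / Real.sqrt (F u - F y0)) :=
  stmt_10_general N hN f hfmono F hF T hT y hreg hypos hymono hsub y0 hy0 hF0
end

section
/- Let F be convex nondecreasing on ℝ₊ with F(0) = 0. Then the function a ↦ ∫_a^{+∞} dt/√(F(t) − F(a)) (valued in [0,∞]) is nonincreasing in a on the set where F(a) > 0. -/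
open MeasureTheory
open scoped ENNReal

lemma incr_aux (F : ℝ → ℝ) (hconv : ConvexOn ℝ (Set.Ici 0) F) {a b c : ℝ}
    (ha : 0 ≤ a) (hab : a ≤ b) (hc : 0 ≤ c) : F (a + c) - F a ≤ F (b + c) - F b := by
  rcases eq_or_lt_of_le hc with h | hc
  · simp [← h]
  rcases eq_or_lt_of_le hab with h | hab
  · subst h; exact le_rfl
  have hb : (0:ℝ) ≤ b := le_trans ha hab.le
  set D : ℝ := b + c - a with hD
  have hD0 : 0 < D := by simp only [hD]; linarith
  set lam : ℝ := c / D with hlam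
  have hl0 : 0 ≤ lam := div_nonneg hc.le hD0.le
  have hl1 : lam ≤ 1 := by
    rw [hlam, div_le_one hD0]; linarith
  have hmemA : a ∈ Set.Ici (0:ℝ) := ha
  have hmemB : b + c ∈ Set.Ici (0:ℝ) := by simp only [Set.mem_Ici]; linarith
  have key1 := hconv.2 hmemA hmemB (by linarith : (0:ℝ) ≤ 1 - lam) hl0 (by ring)
  have key2 := hconv.2 hmemA hmemB hl0 (by linarith : (0:ℝ) ≤ 1 - lam) (by ring)
  have hlD : lam * D = c := by
    rw [hlam, div_mul_cancel₀]; exact hD0.ne'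
  have e1 : (1 - lam) • a + lam • (b + c) = a + c := by
    simp only [smul_eq_mul]; nlinarith [hlD]
  have e2 : lam • a + (1 - lam) • (b + c) = b := by
    simp only [smul_eq_mul]; nlinarith [hlD]
  rw [e1] at key1
  rw [e2] at key2
  simp only [smul_eq_mul] at key1 key2
  linarith

/-- for `F` convex nondecreasing on `ℝ₊` with `F 0 = 0`, the function
`a ↦ ∫_a^∞ dt/√(F t − F a)` is nonincreasing on the set where `F a > 0`. -/
theorem stmt_11 (F : ℝ → ℝ) (hconv : ConvexOn ℝ (Set.Ici 0) F)
    (hmono : MonotoneOn F (Set.Ici 0)) (hF0 : F 0 = 0)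
    (a a' : ℝ) (ha : 0 ≤ a) (haa' : a ≤ a') (hFa : 0 < F a) :
    (∫⁻ t in Set.Ioi a', ENNReal.ofReal (1 / Real.sqrt (F t - F a'))) ≤
      ∫⁻ t in Set.Ioi a, ENNReal.ofReal (1 / Real.sqrt (F t - F a)) := by
  set c : ℝ := a' - a with hc
  have hc0 : 0 ≤ c := by simp only [hc]; linarith
  have ha0 : 0 < a := by
    rcases eq_or_lt_of_le ha with h | h
    · exfalso; rw [← h, hF0] at hFa; exact lt_irrefl 0 hFa
    · exact h
  have hpos : ∀ t : ℝ, a < t → 0 < F t - F a := by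
    intro t hat
    have hslope := hconv.slope_mono_adjacent (Set.mem_Ici.mpr le_rfl)
      (Set.mem_Ici.mpr (le_trans ha hat.le)) ha0 hat
    rw [hF0] at hslope
    simp only [sub_zero] at hslope
    have h1 : F a / a ≤ (F t - F a) / (t - a) := hslope
    have h2 : 0 < F a / a := by positivity
    have h3 : 0 < (F t - F a) / (t - a) := lt_of_lt_of_le h2 h1
    have h4 : 0 < t - a := by linarith
    exact (div_pos_iff.mp h3).resolve_right (fun ⟨_, hneg⟩ => absurd h4 (not_lt.mpr hneg.le))
      |>.1
  have htrans : (∫⁻ t in Set.Ioi a', ENNReal.ofReal (1 / Real.sqrt (F t - F a'))) =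
      ∫⁻ t in Set.Ioi a, ENNReal.ofReal (1 / Real.sqrt (F (t + c) - F a')) := by
    have hmap : Measure.map (fun x : ℝ => x + c) volume = volume :=
      map_add_right_eq_self volume c
    conv_lhs => rw [← hmap]
    rw [Measure.restrict_map (measurable_add_const c) measurableSet_Ioi]
    have hpre : (fun x : ℝ => x + c) ⁻¹' Set.Ioi a' = Set.Ioi a := by
      ext x
      simp only [Set.mem_preimage, Set.mem_Ioi, hc]
      constructor <;> intro h <;> linarith
    rw [hpre]
    exact lintegral_map_equiv _ (MeasurableEquiv.addRight c)
  rw [htrans]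
  refine lintegral_mono_ae ((ae_restrict_iff' measurableSet_Ioi).mpr (ae_of_all _ fun t ht => ?_))
  have h1 : 0 < F t - F a := hpos t ht
  have h2 : F t - F a ≤ F (t + c) - F a' := by
    have h3 := incr_aux F hconv ha (le_of_lt ht) hc0
    have h4 : a + c = a' := by simp [hc]
    rw [h4] at h3
    linarith
  exact ENNReal.ofReal_le_ofReal
    (one_div_le_one_div_of_le (Real.sqrt_pos.mpr h1) (Real.sqrt_le_sqrt (by linarith)))
end

section
/- Let (Y, F) be a measurable space, μ a finite nonnegative measure on (Y,F), and G ⊂ F a family of sets such that ∅ ∈ G, G is closed under finite and countable unions, and G is hereditary (A ∈ G, A' ∈ F, A' ⊂ A ⟹ A' ∈ G). Then μ can be written uniquely as μ = μ₀ + μ₁ where μ₀, μ₁ are finite nonnegative measures, μ₁(A) = 0 for every A ∈ G, and μ₀ is concentrated on some set A₀ ∈ G. -/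
open MeasureTheory Filter ENNReal

/-- Lemma 6.1: decomposition of a finite measure into a part vanishing on a
hereditary, countably-union-closed family `G` and a part concentrated on a member of `G`. -/
theorem stmt_12 {Y : Type*} [MeasurableSpace Y]
    (μ : Measure Y) [IsFiniteMeasure μ]
    (G : Set (Set Y)) (hGmeas : ∀ A ∈ G, MeasurableSet A)
    (hGempty : ∅ ∈ G)
    (hGunion : ∀ A : ℕ → Set Y, (∀ n, A n ∈ G) → (⋃ n, A n) ∈ G)
    (hGhered : ∀ A ∈ G, ∀ A' : Set Y, MeasurableSet A' → A' ⊆ A → A' ∈ G) :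
    ∃! p : Measure Y × Measure Y,
      IsFiniteMeasure p.1 ∧ IsFiniteMeasure p.2 ∧ μ = p.1 + p.2 ∧
      (∀ A ∈ G, p.2 A = 0) ∧ (∃ A₀ ∈ G, p.1 A₀ᶜ = 0) := by
  classical
  -- G is closed under binary unions
  have hGunion2 : ∀ A ∈ G, ∀ B ∈ G, A ∪ B ∈ G := by
    intro A hA B hB
    have h := hGunion (fun n => if n = 0 then A else B)
      (by intro n; by_cases hn : n = 0 <;> simp [hn, hA, hB])
    have he : (⋃ n : ℕ, if n = 0 then A else B) = A ∪ B := by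
      ext x
      simp only [Set.mem_iUnion, Set.mem_union]
      constructor
      · rintro ⟨n, hx⟩
        by_cases hn : n = 0
        · left; simpa [hn] using hx
        · right; simpa [hn] using hx
      · rintro (hx | hx)
        · exact ⟨0, by simpa using hx⟩
        · exact ⟨1, by simpa using hx⟩
    rwa [he] at h
  set S : Set ℝ≥0∞ := (fun A => μ A) '' G with hS
  have hSne : S.Nonempty := ⟨μ ∅, ∅, hGempty, rfl⟩
  obtain ⟨f, hfmono, hftend, hfmem⟩ :=
    exists_seq_tendsto_sSup hSne (OrderTop.bddAbove S)
  choose A hAG hAmu using fun n => hfmem n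
  set A₀ : Set Y := ⋃ n, A n with hA₀def
  have hA₀G : A₀ ∈ G := hGunion A hAG
  have hA₀meas : MeasurableSet A₀ := hGmeas _ hA₀G
  have hle : μ A₀ ≤ sSup S := le_sSup ⟨A₀, hA₀G, rfl⟩
  have hge : sSup S ≤ μ A₀ := by
    refine le_of_tendsto hftend (Filter.Eventually.of_forall fun n => ?_)
    rw [← hAmu n]
    exact measure_mono (Set.subset_iUnion A n)
  have hA₀sup : μ A₀ = sSup S := le_antisymm hle hge
  -- the maximality: μ (B \ A₀) = 0 for all B ∈ G
  have hmax : ∀ B ∈ G, μ (B \ A₀) = 0 := by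
    intro B hB
    by_contra hne
    have hBmeas := hGmeas B hB
    have hdisj : Disjoint A₀ (B \ A₀) := Set.disjoint_sdiff_right.mono_left le_rfl
    have hunion : μ (A₀ ∪ (B \ A₀)) = μ A₀ + μ (B \ A₀) :=
      measure_union hdisj (hBmeas.diff hA₀meas)
    have hlt : μ A₀ < μ (A₀ ∪ (B \ A₀)) := by
      rw [hunion]
      exact ENNReal.lt_add_right (measure_ne_top μ _) hne
    have hmem : μ (A₀ ∪ (B \ A₀)) ≤ sSup S := by
      refine le_sSup ⟨A₀ ∪ (B \ A₀), ?_, rfl⟩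
      have : A₀ ∪ (B \ A₀) ⊆ A₀ ∪ B := Set.union_subset_union_right _ Set.diff_subset
      exact hGhered (A₀ ∪ B) (hGunion2 _ hA₀G _ hB) _
        (hA₀meas.union (hBmeas.diff hA₀meas)) this
    exact absurd (hlt.trans_le hmem) (by simp [hA₀sup])
  refine ⟨(μ.restrict A₀, μ.restrict A₀ᶜ), ⟨?_, ?_, ?_, ?_, ?_⟩, ?_⟩
  · exact inferInstance
  · exact inferInstance
  · simp [Measure.restrict_add_restrict_compl hA₀meas]
  · intro B hB
    rw [Measure.restrict_apply (hGmeas B hB)]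
    simpa [Set.diff_eq] using hmax B hB
  · refine ⟨A₀, hA₀G, ?_⟩
    rw [Measure.restrict_apply hA₀meas.compl]
    simp
  · -- uniqueness
    rintro ⟨ν₀, ν₁⟩ ⟨hν₀fin, hν₁fin, hsum, hν₁G, B₀, hB₀G, hν₀conc⟩
    have hB₀meas := hGmeas B₀ hB₀G
    set C : Set Y := A₀ ∪ B₀ with hCdef
    have hCG : C ∈ G := hGunion2 _ hA₀G _ hB₀G
    have hCmeas : MeasurableSet C := hA₀meas.union hB₀meas
    -- for measurable s, ν₀ s = μ (s ∩ C)
    have key : ∀ s : Set Y, MeasurableSet s → ν₀ s = μ (s ∩ C) := by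
      intro s hs
      have h1 : ν₀ (s \ C) = 0 := by
        refine measure_mono_null ?_ hν₀conc
        intro x hx
        exact fun hxB => hx.2 (Or.inr hxB)
      have h2 : ν₀ s = ν₀ (s ∩ C) := by
        rw [← measure_inter_add_diff s hCmeas, h1, add_zero]
      have h3 : ν₁ (s ∩ C) = 0 := by
        have : s ∩ C ∈ G := hGhered C hCG _ (hs.inter hCmeas) Set.inter_subset_right
        exact hν₁G _ this
      have h4 : μ (s ∩ C) = ν₀ (s ∩ C) + ν₁ (s ∩ C) := by
        rw [hsum]; rfl
      rw [h2, h4, h3, add_zero]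
    -- also μ.restrict A₀ s = μ (s ∩ C)
    have key' : ∀ s : Set Y, MeasurableSet s → μ.restrict A₀ s = μ (s ∩ C) := by
      intro s hs
      rw [Measure.restrict_apply hs]
      have h0 : μ ((s ∩ C) \ A₀) = 0 := by
        refine measure_mono_null ?_ (hmax B₀ hB₀G)
        intro x hx
        rcases hx.1.2 with h | h
        · exact absurd h hx.2
        · exact ⟨h, hx.2⟩
      have : μ (s ∩ C) = μ ((s ∩ C) ∩ A₀) + μ ((s ∩ C) \ A₀) :=
        (measure_inter_add_diff _ hA₀meas).symm
      rw [this, h0, add_zero]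
      congr 1
      ext x
      simp only [Set.mem_inter_iff, Set.mem_union]
      tauto
    have hν₀eq : ν₀ = μ.restrict A₀ :=
      Measure.ext fun s hs => by rw [key s hs, key' s hs]
    have hν₁eq : ν₁ = μ.restrict A₀ᶜ := by
      refine Measure.ext fun s hs => ?_
      have h1 : ν₀ s + ν₁ s = μ s := by rw [hsum]; rfl
      have h2 : μ.restrict A₀ s + μ.restrict A₀ᶜ s = μ s := by
        rw [← Measure.add_apply, Measure.restrict_add_restrict_compl hA₀meas]
      rw [hν₀eq] at h1
      have := h1.trans h2.symm
      exact (ENNReal.add_right_inj (measure_ne_top _ s)).mp this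
    simp [Prod.ext_iff, hν₀eq, hν₁eq]
end
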